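/- For any a ∈ ℝ and b ∈ [0,1], Φ(a + b) − Φ(a − b) ≥ 1 − 2Φ(−b) − a² b exp(−b²/2)/√(2π), where Φ is the standard Gaussian cumulative distribution function. -/

import Mathlib

open MeasureTheory

/-- Standard Gaussian density. -/
noncomputable def stdG (g : ℝ) : ℝ :=
  (Real.sqrt (2 * Real.pi))⁻¹ * Real.exp (-g ^ 2 / 2)

/-- Standard Gaussian cumulative distribution function. -/
noncomputable def Phi (x : ℝ) : ℝ := ∫ u in Set.Iio x, stdG u

/-!
Put `ψ(x) = Φ(x + b) - Φ(x - b) + x² b φ(b)` with `φ = stdG`; note that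
`b e^{-b²/2} / √(2π) = b φ(b)`. By the symmetry `Φ(-x) = 1 - Φ(x)` the function `ψ` is even, and
`ψ(0) = 1 - 2Φ(-b)`, so it suffices that `ψ` is monotone on `[0, ∞)`. Its derivative is
`φ(x + b) - φ(x - b) + 2xbφ(b)`, and
`φ(x - b) - φ(x + b) = 2 φ(b) e^{-x²/2} sinh(xb) ≤ 2 φ(b) xb · e^{-x²/2} cosh x ≤ 2xbφ(b)`
for `x ≥ 0` and `0 ≤ b ≤ 1`, using `sinh t ≤ t cosh t`, `cosh (xb) ≤ cosh x` and
`cosh x ≤ e^{x²/2}`.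
-/

open Real Set

lemma Real.sinh_le_mul_cosh {t : ℝ} (ht : 0 ≤ t) : sinh t ≤ t * cosh t := by
  rcases ht.eq_or_lt with rfl | ht
  · simp
  obtain ⟨ξ, ⟨hξ0, hξt⟩, hslope⟩ := exists_hasDerivAt_eq_slope sinh cosh ht
    continuous_sinh.continuousOn fun x _ ↦ hasDerivAt_sinh x
  rw [sinh_zero, sub_zero, sub_zero, eq_div_iff ht.ne', mul_comm] at hslope
  rw [← hslope]
  exact mul_le_mul_of_nonneg_left
    (cosh_le_cosh.2 (by rw [abs_of_pos hξ0, abs_of_pos ht]; exact hξt.le)) ht.le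

lemma continuous_stdG : Continuous stdG := by
  unfold stdG; fun_prop

lemma stdG_neg (x : ℝ) : stdG (-x) = stdG x := by
  simp [stdG]

lemma integrable_stdG : Integrable stdG := by
  refine ((integrable_exp_neg_mul_sq (by norm_num : (0 : ℝ) < 1 / 2)).const_mul
    (√(2 * π))⁻¹).congr (Filter.Eventually.of_forall fun x ↦ ?_)
  simp only [stdG]
  ring_nf

lemma integral_stdG : ∫ x, stdG x = 1 := by
  have h : (fun x : ℝ ↦ exp (-x ^ 2 / 2)) = fun x ↦ exp (-(1 / 2) * x ^ 2) := by
    funext x; ring_nf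
  simp only [stdG]
  rw [integral_const_mul, h, integral_gaussian, show π / (1 / 2) = 2 * π by ring,
    inv_mul_cancel₀ (by positivity)]

lemma Phi_eq_integral_Iic (x : ℝ) : Phi x = ∫ u in Iic x, stdG u :=
  integral_Iic_eq_integral_Iio.symm

lemma Phi_add_Phi_neg (x : ℝ) : Phi x + Phi (-x) = 1 := by
  have h : Phi (-x) = ∫ u in Ioi x, stdG u := by
    simp only [Phi_eq_integral_Iic, ← integral_comp_neg_Ioi, stdG_neg]
  rw [Phi_eq_integral_Iic, h, intervalIntegral.integral_Iic_add_Ioi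
    integrable_stdG.integrableOn integrable_stdG.integrableOn, integral_stdG]

lemma hasDerivAt_Phi (x : ℝ) : HasDerivAt Phi (stdG x) x := by
  have h : Phi = fun y ↦ Phi 0 + ∫ t in (0 : ℝ)..y, stdG t := by
    funext y
    rw [← intervalIntegral.integral_Iic_sub_Iic integrable_stdG.integrableOn
      integrable_stdG.integrableOn, ← Phi_eq_integral_Iic, ← Phi_eq_integral_Iic]
    ring
  rw [h]
  exact (intervalIntegral.integral_hasDerivAt_right integrable_stdG.intervalIntegrable
    (continuous_stdG.stronglyMeasurableAtFilter _ _) continuous_stdG.continuousAt).const_add _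

lemma stdG_sub_stdG_eq (x b : ℝ) :
    stdG (x - b) - stdG (x + b) = 2 * stdG b * exp (-x ^ 2 / 2) * sinh (x * b) := by
  have hm : exp (-(x - b) ^ 2 / 2) = exp (-b ^ 2 / 2) * exp (-x ^ 2 / 2) * exp (x * b) := by
    rw [← exp_add, ← exp_add]; ring_nf
  have hp : exp (-(x + b) ^ 2 / 2) = exp (-b ^ 2 / 2) * exp (-x ^ 2 / 2) * exp (-(x * b)) := by
    rw [← exp_add, ← exp_add]; ring_nf
  simp only [stdG, hm, hp, sinh_eq]
  ring

lemma stdG_sub_stdG_le {x b : ℝ} (hx : 0 ≤ x) (hb₀ : 0 ≤ b) (hb₁ : b ≤ 1) :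
    stdG (x - b) - stdG (x + b) ≤ 2 * x * b * stdG b := by
  have hxb : 0 ≤ x * b := mul_nonneg hx hb₀
  have hcosh : cosh (x * b) ≤ cosh x :=
    cosh_le_cosh.2 (by rw [abs_of_nonneg hxb, abs_of_nonneg hx]; nlinarith)
  have hexp : exp (-x ^ 2 / 2) * cosh x ≤ 1 := by
    rw [neg_div, exp_neg, inv_mul_le_one₀ (exp_pos _)]
    exact cosh_le_exp_half_sq x
  have hstdG : 0 ≤ 2 * stdG b := by unfold stdG; positivity
  rw [stdG_sub_stdG_eq]
  calc 2 * stdG b * exp (-x ^ 2 / 2) * sinh (x * b)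
      ≤ 2 * stdG b * exp (-x ^ 2 / 2) * (x * b * cosh x) := by
        gcongr
        exact (sinh_le_mul_cosh hxb).trans (mul_le_mul_of_nonneg_left hcosh hxb)
    _ = 2 * stdG b * (x * b) * (exp (-x ^ 2 / 2) * cosh x) := by ring
    _ ≤ 2 * x * b * stdG b :=
        (mul_le_mul_of_nonneg_left hexp (mul_nonneg hstdG hxb)).trans_eq (by ring)

lemma monotoneOn_Phi_window {b : ℝ} (hb₀ : 0 ≤ b) (hb₁ : b ≤ 1) :
    MonotoneOn (fun x ↦ Phi (x + b) - Phi (x - b) + x ^ 2 * b * stdG b) (Ici 0) := by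
  have hderiv : ∀ x : ℝ, HasDerivAt (fun x ↦ Phi (x + b) - Phi (x - b) + x ^ 2 * b * stdG b)
      (stdG (x + b) - stdG (x - b) + 2 * x * b * stdG b) x := by
    intro x
    have hpow : HasDerivAt (fun x : ℝ ↦ x ^ 2 * b * stdG b) (2 * x * b * stdG b) x := by
      simpa using ((hasDerivAt_pow 2 x).mul_const b).mul_const (stdG b)
    exact (((hasDerivAt_Phi _).comp_add_const x b).sub
      ((hasDerivAt_Phi _).comp_sub_const x b)).add hpow
  refine monotoneOn_of_hasDerivWithinAt_nonneg (convex_Ici 0)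
    (fun x _ ↦ (hderiv x).continuousAt.continuousWithinAt)
    (fun x _ ↦ (hderiv x).hasDerivWithinAt) fun x hx ↦ ?_
  rw [interior_Ici] at hx
  linarith [stdG_sub_stdG_le hx.le hb₀ hb₁]

lemma Phi_neg_add_sub_Phi_neg_sub (x b : ℝ) :
    Phi (-x + b) - Phi (-x - b) = Phi (x + b) - Phi (x - b) := by
  have h₁ := Phi_add_Phi_neg (x - b)
  have h₂ := Phi_add_Phi_neg (x + b)
  rw [show -(x - b) = -x + b by ring] at h₁
  rw [show -(x + b) = -x - b by ring] at h₂
  linarith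

theorem gaussian_cdf_window_bound (a b : ℝ) (hb : b ∈ Set.Icc (0 : ℝ) 1) :
    Phi (a + b) - Phi (a - b) ≥
      1 - 2 * Phi (-b) - a ^ 2 * b * Real.exp (-b ^ 2 / 2) / Real.sqrt (2 * Real.pi) := by
  obtain ⟨hb₀, hb₁⟩ := hb
  have hmono := monotoneOn_Phi_window hb₀ hb₁ self_mem_Ici (abs_nonneg a) (abs_nonneg a)
  have heven : Phi (|a| + b) - Phi (|a| - b) = Phi (a + b) - Phi (a - b) := by
    rcases abs_choice a with h | h <;> rw [h]
    exact Phi_neg_add_sub_Phi_neg_sub a b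
  have hcoeff : a ^ 2 * b * exp (-b ^ 2 / 2) / √(2 * π) = |a| ^ 2 * b * stdG b := by
    rw [sq_abs, stdG]; ring
  simp only [zero_add, zero_sub, ne_eq, OfNat.ofNat_ne_zero, not_false_eq_true, zero_pow,
    zero_mul, add_zero] at hmono
  linarith [Phi_add_Phi_neg b]
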